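/- arXiv:1304.3484 — 4 statements merged into one kernel-verified Lean document; each statement's English description precedes it below -/
import Mathlib

section
/- Let h>0, α,β∈(0,1], d≥1, let f: ℕ×ℝ^d→ℝ^d be any function and let x_a, x_0∈ℝ^d. Then the sequential Caputo initial value problem has exactly one solution: there exists a unique X: ℕ→ℝ^d such that (C_β(C_α X))(n) = f(n, X(n)) for all n∈ℕ, X(0) = x_a and (C_α X)(0) = x_0. -/
/-- `c γ m = Γ(γ+m)/(Γ(γ)·Γ(m+1))`. -/
noncomputable def cCoeff (γ : ℝ) (m : ℕ) : ℝ :=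
  Real.Gamma (γ + m) / (Real.Gamma γ * Real.Gamma (m + 1))

/-- Caputo `h`-difference of order `α ∈ (0,1]` of an `ℝ^d`-valued sequence. -/
noncomputable def caputo (h α : ℝ) {d : ℕ} (u : ℕ → Fin d → ℝ) (n : ℕ) : Fin d → ℝ :=
  if α < 1 then
    h ^ (1 - α) • ∑ k ∈ Finset.range (n + 1), cCoeff (1 - α) (n - k) • (h⁻¹ • (u (k + 1) - u k))
  else h⁻¹ • (u (n + 1) - u n)

/-- `X` solves the sequential Caputo initial value problem
`(C_β(C_α X))(n) = f(n, X(n))`, `X(0) = x_a`, `(C_α X)(0) = x_0`. -/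
noncomputable def IsSolIVP (h α β : ℝ) {d : ℕ} (f : ℕ → (Fin d → ℝ) → Fin d → ℝ)
    (xa x0 : Fin d → ℝ) (X : ℕ → Fin d → ℝ) : Prop :=
  (∀ n : ℕ, caputo h β (caputo h α X) n = f n (X n)) ∧ X 0 = xa ∧ caputo h α X 0 = x0

/-- The "tail" of the Caputo difference: `caputo` applied to the truncation of `u` to `[0,n]`. -/
noncomputable def truncT (h α : ℝ) {d : ℕ} (u : ℕ → Fin d → ℝ) (n : ℕ) : Fin d → ℝ :=
  caputo h α (fun k => if k ≤ n then u k else 0) n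

lemma truncT_congr (h α : ℝ) {d : ℕ} {u w : ℕ → Fin d → ℝ} {n : ℕ}
    (huw : ∀ k ≤ n, u k = w k) : truncT h α u n = truncT h α w n := by
  unfold truncT
  have : (fun k => if k ≤ n then u k else 0) = (fun k => if k ≤ n then w k else 0) := by
    funext k
    split
    · exact huw k ‹_›
    · rfl
  rw [this]

/-- Decomposition: `caputo h α u n = h^(-α) • u (n+1) + (term depending only on u|≤n)`. -/
lemma caputo_decomp (h α : ℝ) (hh : 0 < h) (hα2 : α ≤ 1)
    {d : ℕ} (u : ℕ → Fin d → ℝ) (n : ℕ) :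
    caputo h α u n = h ^ (-α) • u (n + 1) + truncT h α u n := by
  have hpow : h ^ (1 - α) * h⁻¹ = h ^ (-α) := by
    rw [← Real.rpow_neg_one h, ← Real.rpow_add hh]
    congr 1; ring
  unfold truncT caputo
  by_cases hα : α < 1
  · simp only [if_pos hα]
    rw [Finset.sum_range_succ, Finset.sum_range_succ]
    have hc0 : cCoeff (1 - α) (n - n) = 1 := by
      have : (0:ℝ) < 1 - α := by linarith
      simp [cCoeff, Real.Gamma_one, div_self, (Real.Gamma_pos_of_pos this).ne']
    have hsum : (∑ k ∈ Finset.range n, cCoeff (1-α) (n-k) •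
          (h⁻¹ • ((if k+1 ≤ n then u (k+1) else 0) - (if k ≤ n then u k else 0))))
        = ∑ k ∈ Finset.range n, cCoeff (1-α) (n-k) • (h⁻¹ • (u (k+1) - u k)) := by
      refine Finset.sum_congr rfl fun k hk => ?_
      have hk' := Finset.mem_range.mp hk
      rw [if_pos (show k + 1 ≤ n from hk'), if_pos hk'.le]
    rw [hsum, hc0, if_neg (Nat.not_succ_le_self n), if_pos (le_refl n), one_smul, one_smul,
      smul_add, smul_add, smul_smul, smul_smul, hpow, smul_sub, smul_sub, smul_zero]
    abel
  · have hα1 : α = 1 := le_antisymm hα2 (not_lt.mp hα)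
    subst hα1
    simp only [if_neg hα]
    rw [if_neg (Nat.not_succ_le_self n), if_pos (le_refl n), Real.rpow_neg_one,
      smul_sub, smul_sub, smul_zero]
    abel

/-- One step of the combined recursion on pairs `(X n, Y n)` with `Y = caputo h α X`. -/
noncomputable def stepG (h α β : ℝ) {d : ℕ} (f : ℕ → (Fin d → ℝ) → Fin d → ℝ)
    (Z : ℕ → (Fin d → ℝ) × (Fin d → ℝ)) (n : ℕ) : (Fin d → ℝ) × (Fin d → ℝ) :=
  (h ^ α • ((Z n).2 - truncT h α (fun k => (Z k).1) n),
   h ^ β • (f n (Z n).1 - truncT h β (fun k => (Z k).2) n))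

lemma stepG_congr (h α β : ℝ) {d : ℕ} (f : ℕ → (Fin d → ℝ) → Fin d → ℝ)
    {Z W : ℕ → (Fin d → ℝ) × (Fin d → ℝ)} {n : ℕ} (hZW : ∀ k ≤ n, Z k = W k) :
    stepG h α β f Z n = stepG h α β f W n := by
  unfold stepG
  rw [hZW n le_rfl, truncT_congr h α (fun k hk => by rw [hZW k hk]),
    truncT_congr h β (fun k hk => by rw [hZW k hk])]

/-- History of the recursion: `hist n` is the solution truncated to `[0,n]`. -/
noncomputable def hist (h α β : ℝ) {d : ℕ} (f : ℕ → (Fin d → ℝ) → Fin d → ℝ)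
    (xa x0 : Fin d → ℝ) : ℕ → ℕ → (Fin d → ℝ) × (Fin d → ℝ)
  | 0 => fun _ => (xa, x0)
  | n + 1 => fun k => if k = n + 1 then stepG h α β f (hist h α β f xa x0 n) n
      else hist h α β f xa x0 n k

noncomputable def Zsol (h α β : ℝ) {d : ℕ} (f : ℕ → (Fin d → ℝ) → Fin d → ℝ)
    (xa x0 : Fin d → ℝ) (n : ℕ) : (Fin d → ℝ) × (Fin d → ℝ) :=
  hist h α β f xa x0 n n

lemma hist_succ (h α β : ℝ) {d : ℕ} (f : ℕ → (Fin d → ℝ) → Fin d → ℝ)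
    (xa x0 : Fin d → ℝ) (n k : ℕ) :
    hist h α β f xa x0 (n + 1) k = if k = n + 1 then stepG h α β f (hist h α β f xa x0 n) n
      else hist h α β f xa x0 n k := rfl

lemma Zsol_agree (h α β : ℝ) {d : ℕ} (f : ℕ → (Fin d → ℝ) → Fin d → ℝ)
    (xa x0 : Fin d → ℝ) : ∀ n, ∀ k ≤ n, Zsol h α β f xa x0 k = hist h α β f xa x0 n k := by
  intro n
  induction n with
  | zero => intro k hk; interval_cases k; rfl
  | succ n ih =>
    intro k hk
    rcases Nat.lt_or_ge k (n + 1) with hlt | hge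
    · have : k ≤ n := Nat.lt_succ_iff.mp hlt
      rw [ih k this]
      rw [hist_succ, if_neg (by omega)]
    · have hk1 : k = n + 1 := le_antisymm hk hge
      subst hk1; rfl

lemma Zsol_succ (h α β : ℝ) {d : ℕ} (f : ℕ → (Fin d → ℝ) → Fin d → ℝ)
    (xa x0 : Fin d → ℝ) (n : ℕ) :
    Zsol h α β f xa x0 (n + 1) = stepG h α β f (Zsol h α β f xa x0) n := by
  show hist h α β f xa x0 (n+1) (n+1) = _
  rw [hist_succ, if_pos rfl]
  exact stepG_congr h α β f (fun k hk => (Zsol_agree h α β f xa x0 n k hk).symm)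

theorem ivp_exists_unique (h α β : ℝ) (hh : 0 < h)
    (hα1 : 0 < α) (hα2 : α ≤ 1) (hβ1 : 0 < β) (hβ2 : β ≤ 1)
    (d : ℕ) (hd : 1 ≤ d) (f : ℕ → (Fin d → ℝ) → Fin d → ℝ) (xa x0 : Fin d → ℝ) :
    ∃! X : ℕ → Fin d → ℝ, IsSolIVP h α β f xa x0 X := by
  have hcan : ∀ (a : ℝ) (v : Fin d → ℝ), h ^ a • h ^ (-a) • v = v := by
    intro a v
    rw [smul_smul, ← Real.rpow_add hh, add_neg_cancel, Real.rpow_zero, one_smul]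
  have hcan' : ∀ (a : ℝ) (v : Fin d → ℝ), h ^ (-a) • h ^ a • v = v := by
    intro a v
    rw [smul_smul, ← Real.rpow_add hh, neg_add_cancel, Real.rpow_zero, one_smul]
  have key : ∀ γ : ℝ, γ ≤ 1 → ∀ (u : ℕ → Fin d → ℝ) (n : ℕ) (v : Fin d → ℝ),
      caputo h γ u n = v ↔ u (n + 1) = h ^ γ • (v - truncT h γ u n) := by
    intro γ hγ2 u n v
    rw [caputo_decomp h γ hh hγ2]
    constructor
    · intro hv
      rw [← hv, add_sub_cancel_right, hcan]
    · intro hu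
      rw [hu, hcan', sub_add_cancel]
  set X : ℕ → Fin d → ℝ := fun n => (Zsol h α β f xa x0 n).1 with hXdef
  set Y : ℕ → Fin d → ℝ := fun n => (Zsol h α β f xa x0 n).2 with hYdef
  have hXsucc : ∀ n, X (n + 1) = h ^ α • (Y n - truncT h α X n) := by
    intro n
    have := congrArg Prod.fst (Zsol_succ h α β f xa x0 n)
    exact this
  have hYsucc : ∀ n, Y (n + 1) = h ^ β • (f n (X n) - truncT h β Y n) := by
    intro n
    have := congrArg Prod.snd (Zsol_succ h α β f xa x0 n)
    exact this
  have hYX : ∀ n, caputo h α X n = Y n := fun n => (key α hα2 X n (Y n)).mpr (hXsucc n)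
  have hfY : ∀ n, caputo h β Y n = f n (X n) := fun n => (key β hβ2 Y n (f n (X n))).mpr (hYsucc n)
  have hCXY : caputo h α X = Y := funext hYX
  refine ⟨X, ⟨?_, rfl, ?_⟩, ?_⟩
  · intro n
    rw [hCXY]
    exact hfY n
  · rw [hCXY]; rfl
  · intro W hW
    obtain ⟨hW1, hW2, hW3⟩ := hW
    set Z' : ℕ → (Fin d → ℝ) × (Fin d → ℝ) := fun n => (W n, caputo h α W n) with hZ'def
    have main : ∀ n, ∀ k ≤ n, Z' k = Zsol h α β f xa x0 k := by
      intro n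
      induction n with
      | zero =>
        intro k hk
        interval_cases k
        show (W 0, caputo h α W 0) = (xa, x0)
        rw [hW2, hW3]
      | succ n ih =>
        intro k hk
        rcases Nat.lt_or_ge k (n + 1) with hlt | hge
        · exact ih k (Nat.lt_succ_iff.mp hlt)
        · have hk1 : k = n + 1 := le_antisymm hk hge
          subst hk1
          have h1 : W (n + 1) = h ^ α • (caputo h α W n - truncT h α W n) :=
            (key α hα2 W n (caputo h α W n)).mp rfl
          have h2 : caputo h α W (n + 1) =
              h ^ β • (f n (W n) - truncT h β (caputo h α W) n) :=
            (key β hβ2 (caputo h α W) n (f n (W n))).mp (hW1 n)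
          have hstep : Z' (n + 1) = stepG h α β f Z' n := by
            show (W (n + 1), caputo h α W (n + 1)) = _
            unfold stepG
            rw [h1, h2]
          rw [hstep, Zsol_succ h α β f xa x0 n]
          exact stepG_congr h α β f ih
    funext n
    exact congrArg Prod.fst (main n n le_rfl)
end

section
/- Let h>0, α,β∈(0,1], d≥1, f: ℕ×ℝ^d→ℝ^d and x_a, x_0∈ℝ^d. A function X: ℕ→ℝ^d solves the sequential Caputo initial value problem if and only if it satisfies the summation (Volterra-type) equation X(n) = x_a + φ_{1,0}(n)·x_0 + h^{α+β}·∑_{r=0}^{n−2} c_{α+β}(n−2−r)·f(r, X(r)) for every n∈ℕ, where the sum is empty for n<2 and φ_{1,0}(n) = Γ(n+α)/(Γ(α+1)·Γ(n))·h^α for n≥1, φ_{1,0}(0)=0. -/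
/-- The function `φ_{k,s}` of the paper. -/
noncomputable def phi (h α β : ℝ) (k s : ℕ) (n : ℤ) : ℝ :=
  if (k : ℤ) ≤ n then
    Real.Gamma ((n : ℝ) - (k : ℝ) + 1 + (k : ℝ) * α + (s : ℝ) * β)
      / (Real.Gamma ((k : ℝ) * α + (s : ℝ) * β + 1) * Real.Gamma ((n : ℝ) - (k : ℝ) + 1))
      * h ^ ((k : ℝ) * α + (s : ℝ) * β)
  else 0

/-! The coefficients `c_γ(m) = γ(γ+1)⋯(γ+m-1)/m!` are those of `(1 - z)^(-γ)`, so the convolution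
identity `c_γ ⋆ c_δ = c_{γ+δ}` is Chu–Vandermonde, and `c_1 = 1` has backward difference `δ_0`.
Hence the fractional sum `S_γ g(n) = h^γ ∑_{r<n} c_γ(n-1-r) g(r)` is a right inverse of the Caputo
difference, `C_γ (a + S_γ g) = g`, since `C_γ` convolves the difference with `c_{1-γ}`; the
composition `S_α ∘ S_β` is `S_{α+β}` delayed by one step; and `C_γ u` together with `u(0)`
determines `u`. So, with `F(r) = f(r, X(r))`, `X` solves the IVP iff `C_α X = x_0 + S_β F` and
`X = x_a + S_α (x_0 + S_β F)`, and expanding the latter is the Volterra equation. -/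

open Finset

namespace Ring

variable {R : Type*} [CommRing R] [BinomialRing R]

theorem multichoose_eq_neg_one_pow_mul_choose (r : R) (k : ℕ) :
    multichoose r k = (-1) ^ k * choose (-r) k := by
  rw [choose_neg', Units.smul_def, zsmul_eq_mul, Int.cast_negOnePow_natCast, ← mul_assoc,
    ← mul_pow, neg_one_mul, neg_neg, one_pow, one_mul]

theorem multichoose_add (r s : R) (k : ℕ) :
    multichoose (r + s) k = ∑ ij ∈ antidiagonal k, multichoose r ij.1 * multichoose s ij.2 := by
  simp only [multichoose_eq_neg_one_pow_mul_choose, neg_add,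
    add_choose_eq k (Commute.all (-r) (-s)), mul_sum]
  refine sum_congr rfl fun ij hij => ?_
  rw [← mem_antidiagonal.mp hij, pow_add]
  ring

end Ring

theorem Real.Gamma_add_nat_eq_mul_ascPochhammer {γ : ℝ} (hγ : 0 < γ) (m : ℕ) :
    Real.Gamma (γ + m) = Real.Gamma γ * (ascPochhammer ℝ m).eval γ := by
  induction m with
  | zero => simp
  | succ m ih =>
    rw [Nat.cast_succ, ← add_assoc, Real.Gamma_add_one (by positivity), ih,
      ascPochhammer_succ_eval]
    ring

namespace CaputoIVP

section Sequences

variable {E : Type*} [AddCommGroup E]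

def delay (u : ℕ → E) : ℕ → E
  | 0 => 0
  | n + 1 => u n

@[simp] theorem delay_zero (u : ℕ → E) : delay u 0 = 0 := rfl

@[simp] theorem delay_succ (u : ℕ → E) (n : ℕ) : delay u (n + 1) = u n := rfl

theorem eq_of_sub_succ_eq {u v : ℕ → E} (h0 : u 0 = v 0)
    (hsucc : ∀ k, u (k + 1) - u k = v (k + 1) - v k) : u = v := by
  funext n
  rw [eq_sum_range_sub u, eq_sum_range_sub v, h0, sum_congr rfl fun k _ => hsucc k]

variable [Module ℝ E]

theorem delay_smul (c : ℝ) (u : ℕ → E) : delay (c • u) = c • delay u := by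
  funext n; cases n <;> simp

def conv (a : ℕ → ℝ) (u : ℕ → E) (n : ℕ) : E :=
  ∑ k ∈ range (n + 1), a (n - k) • u k

theorem conv_add_right (a : ℕ → ℝ) (u v : ℕ → E) : conv a (u + v) = conv a u + conv a v := by
  funext n; simp [conv, smul_add, sum_add_distrib]

theorem conv_sub_right (a : ℕ → ℝ) (u v : ℕ → E) : conv a (u - v) = conv a u - conv a v := by
  funext n; simp [conv, smul_sub, sum_sub_distrib]

theorem conv_smul_right (a : ℕ → ℝ) (c : ℝ) (u : ℕ → E) : conv a (c • u) = c • conv a u := by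
  funext n; simp [conv, smul_sum, smul_comm c]

theorem conv_sub_left (a b : ℕ → ℝ) (u : ℕ → E) : conv (a - b) u = conv a u - conv b u := by
  funext n; simp [conv, sub_smul, sum_sub_distrib]

theorem conv_smul_const (a b : ℕ → ℝ) (x : E) :
    conv a (fun k => b k • x) = fun n => conv a b n • x := by
  funext n; simp [conv, sum_smul, smul_smul]

theorem conv_delay_left (a : ℕ → ℝ) (u : ℕ → E) : conv (delay a) u = delay (conv a u) := by
  funext n
  cases n with
  | zero => simp [conv]
  | succ n =>
    rw [conv, sum_range_succ, Nat.sub_self, delay_zero, zero_smul, add_zero, delay_succ, conv]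
    refine sum_congr rfl fun k hk => ?_
    rw [Nat.succ_sub (Nat.le_of_lt_succ (mem_range.mp hk)), delay_succ]

theorem conv_delay_right (a : ℕ → ℝ) (u : ℕ → E) : conv a (delay u) = delay (conv a u) := by
  funext n
  cases n with
  | zero => simp [conv]
  | succ n => simp [conv, sum_range_succ']

theorem conv_conv (a b : ℕ → ℝ) (u : ℕ → E) : conv a (conv b u) = conv (conv a b) u := by
  funext n
  simp only [conv, smul_sum, smul_smul, sum_smul]
  rw [sum_comm' (t' := range (n + 1)) (s' := fun j => Ico j (n + 1))
    (fun k j => by simp only [mem_range, mem_Ico]; omega)]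
  refine sum_congr rfl fun j hj => ?_
  rw [sum_Ico_eq_sum_range, Nat.succ_sub (Nat.le_of_lt_succ (mem_range.mp hj))]
  refine sum_congr rfl fun i _ => ?_
  rw [Nat.add_sub_cancel_left, Nat.sub_sub, smul_eq_mul]

theorem conv_single_zero (u : ℕ → E) : conv (Pi.single 0 1) u = u := by
  funext n
  rw [conv, sum_eq_single_of_mem n (self_mem_range_succ n), Nat.sub_self, Pi.single_eq_same,
    one_smul]
  intro k hk hkn
  rw [Pi.single_eq_of_ne (by have := mem_range.mp hk; omega), zero_smul]

theorem conv_injective {a : ℕ → ℝ} (ha : a 0 ≠ 0) : Function.Injective (conv (E := E) a) := by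
  intro u v huv
  funext n
  induction n using Nat.strong_induction_on with
  | _ n ih =>
    have hn := congrFun huv n
    rw [conv, conv, sum_range_succ, sum_range_succ, Nat.sub_self,
      sum_congr rfl fun k hk => by rw [ih k (mem_range.mp hk)]] at hn
    exact smul_right_injective E ha (add_left_cancel hn)

theorem cCoeff_zero_right {γ : ℝ} (hγ : 0 < γ) : cCoeff γ 0 = 1 := by
  simp [cCoeff, (Real.Gamma_pos_of_pos hγ).ne']

theorem cCoeff_eq_multichoose {γ : ℝ} (hγ : 0 < γ) (m : ℕ) :
    cCoeff γ m = Ring.multichoose γ m := by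
  have hfac := Ring.factorial_nsmul_multichoose_eq_ascPochhammer γ m
  rw [Polynomial.ascPochhammer_smeval_eq_eval, nsmul_eq_mul] at hfac
  have hΓ : Real.Gamma γ ≠ 0 := (Real.Gamma_pos_of_pos hγ).ne'
  have hm : (m.factorial : ℝ) ≠ 0 := by positivity
  rw [cCoeff, Real.Gamma_add_nat_eq_mul_ascPochhammer hγ, Real.Gamma_nat_eq_factorial, ← hfac]
  field_simp

theorem cCoeff_one : cCoeff 1 = fun _ => 1 := by
  funext m
  rw [cCoeff_eq_multichoose one_pos, Ring.multichoose_one]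

theorem cCoeff_one_sub_delay : cCoeff 1 - delay (cCoeff 1) = Pi.single 0 1 := by
  funext m
  cases m <;> simp [cCoeff_one]

theorem conv_cCoeff {γ δ : ℝ} (hγ : 0 < γ) (hδ : 0 < δ) :
    conv (cCoeff γ) (cCoeff δ) = cCoeff (γ + δ) := by
  funext n
  rw [conv, cCoeff_eq_multichoose (add_pos hγ hδ), add_comm γ δ, Ring.multichoose_add,
    Nat.sum_antidiagonal_eq_sum_range_succ (fun i j => Ring.multichoose δ i * Ring.multichoose γ j)]
  refine sum_congr rfl fun k _ => ?_
  rw [cCoeff_eq_multichoose hγ, cCoeff_eq_multichoose hδ, smul_eq_mul, mul_comm]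

noncomputable def fracSum (h γ : ℝ) (g : ℕ → E) : ℕ → E :=
  h ^ γ • delay (conv (cCoeff γ) g)

theorem fracSum_apply (h γ : ℝ) (g : ℕ → E) (n : ℕ) :
    fracSum h γ g n = h ^ γ • ∑ r ∈ range n, cCoeff γ (n - 1 - r) • g r := by
  cases n <;> simp [fracSum, conv]

theorem fracSum_add (h γ : ℝ) (u v : ℕ → E) :
    fracSum h γ (u + v) = fracSum h γ u + fracSum h γ v := by
  funext n
  cases n <;> simp [fracSum, conv_add_right, smul_add]

theorem fracSum_succ_sub (h γ : ℝ) (g : ℕ → E) (k : ℕ) :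
    fracSum h γ g (k + 1) - fracSum h γ g k = h ^ γ • conv (cCoeff γ - delay (cCoeff γ)) g k := by
  rw [conv_sub_left, conv_delay_left]
  cases k <;> simp [fracSum, smul_sub]

theorem fracSum_fracSum {h α β : ℝ} (hh : 0 < h) (hα : 0 < α) (hβ : 0 < β) (g : ℕ → E) :
    fracSum h α (fracSum h β g) = delay (fracSum h (α + β) g) := by
  simp only [fracSum, conv_smul_right, conv_delay_right, delay_smul, conv_conv,
    conv_cCoeff hα hβ, smul_smul, Real.rpow_add hh]

theorem phi_one_zero_succ (h α β : ℝ) (m : ℕ) :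
    phi h α β 1 0 ((m + 1 : ℕ) : ℤ) = h ^ α * cCoeff (α + 1) m := by
  rw [phi, if_pos (by omega), cCoeff]
  push_cast
  ring_nf

theorem fracSum_const {h α : ℝ} (hα : 0 < α) (β : ℝ) (x : E) (n : ℕ) :
    fracSum h α (fun _ => x) n = phi h α β 1 0 n • x := by
  have hx : (fun _ => x) = fun k => cCoeff 1 k • x := by simp [cCoeff_one]
  cases n with
  | zero => simp [fracSum, phi]
  | succ m =>
    rw [hx, fracSum, conv_smul_const, conv_cCoeff hα one_pos, phi_one_zero_succ, mul_smul]
    rfl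

end Sequences

section Caputo

variable {h α : ℝ} {d : ℕ}

theorem caputo_eq_of_sub_succ (hh : 0 < h) (hα : α ≤ 1) {u w : ℕ → Fin d → ℝ}
    (hw : ∀ k, u (k + 1) - u k = h ^ α • w k) :
    caputo h α u = if α < 1 then conv (cCoeff (1 - α)) w else w := by
  have hscale : h⁻¹ * h ^ α = h ^ (α - 1) := by
    rw [Real.rpow_sub hh, Real.rpow_one, inv_mul_eq_div]
  funext n
  split_ifs with hα1
  · simp only [caputo, if_pos hα1, hw, smul_smul, hscale, smul_sum, conv]
    refine sum_congr rfl fun k _ => ?_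
    rw [mul_left_comm, ← Real.rpow_add hh, sub_add_sub_cancel', sub_self, Real.rpow_zero, mul_one]
  · rw [caputo, if_neg hα1, hw, smul_smul, le_antisymm hα (not_lt.mp hα1), Real.rpow_one,
      inv_mul_cancel₀ hh.ne', one_smul]

theorem caputo_const_add_fracSum (hh : 0 < h) (hα0 : 0 < α) (hα1 : α ≤ 1) (a : Fin d → ℝ)
    (g : ℕ → Fin d → ℝ) : caputo h α (fun n => a + fracSum h α g n) = g := by
  rw [caputo_eq_of_sub_succ hh hα1 fun k => by rw [add_sub_add_left_eq_sub, fracSum_succ_sub]]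
  split_ifs with hα
  · have hkernel : conv (cCoeff (1 - α)) (cCoeff α - delay (cCoeff α)) = Pi.single 0 1 := by
      rw [conv_sub_right, conv_delay_right, conv_cCoeff (sub_pos.mpr hα) hα0, sub_add_cancel,
        cCoeff_one_sub_delay]
    rw [conv_conv, hkernel, conv_single_zero]
  · rw [le_antisymm hα1 (not_lt.mp hα), cCoeff_one_sub_delay, conv_single_zero]

theorem eq_of_caputo_eq (hh : 0 < h) {u v : ℕ → Fin d → ℝ} (h0 : u 0 = v 0)
    (huv : caputo h α u = caputo h α v) : u = v := by
  have hdiff : (fun k => h⁻¹ • (u (k + 1) - u k)) = fun k => h⁻¹ • (v (k + 1) - v k) := by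
    by_cases hα1 : α < 1
    · refine conv_injective ((cCoeff_zero_right (sub_pos.mpr hα1)).trans_ne one_ne_zero) ?_
      funext n
      have hn := congrFun huv n
      simp only [caputo, if_pos hα1] at hn
      exact smul_right_injective _ (Real.rpow_pos_of_pos hh _).ne' hn
    · funext n
      simpa only [caputo, if_neg hα1] using congrFun huv n
  exact eq_of_sub_succ_eq h0 fun k => smul_right_injective _ (inv_ne_zero hh.ne') (congrFun hdiff k)

theorem volterra_eq_const_add_fracSum {β : ℝ} (hh : 0 < h) (hα : 0 < α) (hβ : 0 < β)
    (xa x0 : Fin d → ℝ) (F : ℕ → Fin d → ℝ) (n : ℕ) :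
    xa + phi h α β 1 0 (n : ℤ) • x0
        + h ^ (α + β) • ∑ r ∈ range (n - 1), cCoeff (α + β) (n - 2 - r) • F r
      = xa + fracSum h α ((fun _ => x0) + fracSum h β F) n := by
  rw [fracSum_add, fracSum_fracSum hh hα hβ, Pi.add_apply, fracSum_const hα β, add_assoc]
  cases n with
  | zero => simp
  | succ m => simp [fracSum_apply, Nat.sub_sub]

end Caputo

end CaputoIVP

open CaputoIVP in
theorem ivp_iff_volterra_general (h α β : ℝ) (hh : 0 < h)
    (hα1 : 0 < α) (hα2 : α ≤ 1) (hβ1 : 0 < β) (hβ2 : β ≤ 1)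
    (d : ℕ) (f : ℕ → (Fin d → ℝ) → Fin d → ℝ) (xa x0 : Fin d → ℝ)
    (X : ℕ → Fin d → ℝ) :
    IsSolIVP h α β f xa x0 X ↔
      ∀ n : ℕ,
        X n = xa + phi h α β 1 0 (n : ℤ) • x0
          + h ^ (α + β) • ∑ r ∈ Finset.range (n - 1), cCoeff (α + β) (n - 2 - r) • f r (X r) := by
  set F : ℕ → Fin d → ℝ := fun r => f r (X r)
  set Y : ℕ → Fin d → ℝ := (fun _ => x0) + fracSum h β F
  have hY0 : Y 0 = x0 := by simp [Y, fracSum]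
  have hCY : caputo h β Y = F := caputo_const_add_fracSum hh hβ1 hβ2 x0 F
  have hCSY : caputo h α (fun n => xa + fracSum h α Y n) = Y :=
    caputo_const_add_fracSum hh hα1 hα2 xa Y
  simp only [volterra_eq_const_add_fracSum hh hα1 hβ1, ← funext_iff]
  constructor
  · rintro ⟨hF, hX0, hCX0⟩
    have hCX : caputo h α X = Y :=
      eq_of_caputo_eq hh (hCX0.trans hY0.symm) ((funext hF).trans hCY.symm)
    exact eq_of_caputo_eq hh (by simp [hX0, fracSum]) (hCX.trans hCSY.symm)
  · intro hX
    have hCX : caputo h α X = Y := hX ▸ hCSY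
    exact ⟨fun n => by rw [hCX, hCY], by rw [hX]; simp [fracSum], by rw [hCX, hY0]⟩

theorem ivp_iff_volterra (h α β : ℝ) (hh : 0 < h)
    (hα1 : 0 < α) (hα2 : α ≤ 1) (hβ1 : 0 < β) (hβ2 : β ≤ 1)
    (d : ℕ) (hd : 1 ≤ d) (f : ℕ → (Fin d → ℝ) → Fin d → ℝ) (xa x0 : Fin d → ℝ)
    (X : ℕ → Fin d → ℝ) :
    IsSolIVP h α β f xa x0 X ↔
      ∀ n : ℕ,
        X n = xa + phi h α β 1 0 (n : ℤ) • x0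
          + h ^ (α + β) • ∑ r ∈ Finset.range (n - 1), cCoeff (α + β) (n - 2 - r) • f r (X r) :=
  ivp_iff_volterra_general h α β hh hα1 hα2 hβ1 hβ2 d f xa x0 X
end

section
/- Let h>0, α,β∈(0,1], d≥1, f: ℕ×ℝ^d→ℝ^d and x_a, x_0∈ℝ^d, and let X be the unique solution of the sequential Caputo initial value problem. Then the first Caputo difference of X satisfies, for every n∈ℕ, (C_α X)(n) = x_0 + h^β·∑_{r=0}^{n−1} c_β(n−1−r)·f(r, X(r)), where the sum is empty for n=0. -/
/-!
Only the order-`β` difference of `Y = C_α X` matters. For `β < 1`, `C_β Y` is `h^{-β}` times the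
discrete convolution of `ΔY` with `c_{1-β}`. Since `c_γ(m)` is the multiset coefficient
`Ring.multichoose γ m`, Chu–Vandermonde gives `c_β * c_{1-β} = c_1 = 1`, so convolving `C_β Y` with
`c_β` returns the partial sums of `ΔY`, that is `Y n - Y 0`. For `β = 1` this is telescoping.
-/

open Finset

theorem Ring.multichoose_add_s11 {R : Type*} [CommRing R] [BinomialRing R] (r s : R) (k : ℕ) :
    Ring.multichoose (r + s) k =
      ∑ ij ∈ antidiagonal k, Ring.multichoose r ij.1 * Ring.multichoose s ij.2 := by
  have h := Ring.add_choose_eq (r := -r) (s := -s) k (Commute.all _ _)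
  rw [← neg_add, Ring.choose_neg'] at h
  have hsign : ∀ ij ∈ antidiagonal k, Ring.choose (-r) ij.1 * Ring.choose (-s) ij.2
      = Int.negOnePow k • (Ring.multichoose r ij.1 * Ring.multichoose s ij.2) := by
    intro ij hij
    rw [Ring.choose_neg', Ring.choose_neg', smul_mul_smul_comm, ← Int.negOnePow_add,
      ← Nat.cast_add, mem_antidiagonal.mp hij]
  rw [sum_congr rfl hsign, ← smul_sum] at h
  exact (smul_left_cancel_iff _).mp h

theorem Real.Gamma_add_nat_eq_ascPochhammer_mul {γ : ℝ} (hγ : 0 < γ) (m : ℕ) :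
    Real.Gamma (γ + m) = (ascPochhammer ℝ m).eval γ * Real.Gamma γ := by
  induction m with
  | zero => simp
  | succ m ih =>
    rw [Nat.cast_succ, ← add_assoc, Real.Gamma_add_one (by positivity), ih,
      ascPochhammer_succ_eval]
    ring

theorem cCoeff_eq_multichoose {γ : ℝ} (hγ : 0 < γ) (m : ℕ) :
    cCoeff γ m = Ring.multichoose γ m := by
  have hfact := Ring.factorial_nsmul_multichoose_eq_ascPochhammer γ m
  rw [Polynomial.ascPochhammer_smeval_eq_eval, nsmul_eq_mul] at hfact
  rw [cCoeff, Real.Gamma_add_nat_eq_ascPochhammer_mul hγ, Real.Gamma_nat_eq_factorial, ← hfact]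
  have hΓ : Real.Gamma γ ≠ 0 := (Real.Gamma_pos_of_pos hγ).ne'
  have hm : (m.factorial : ℝ) ≠ 0 := by positivity
  field_simp

theorem cCoeff_one (m : ℕ) : cCoeff 1 m = 1 := by
  rw [cCoeff_eq_multichoose one_pos, Ring.multichoose_one]

theorem sum_range_smul_sum_range_smul_comm {R M : Type*} [Semiring R] [AddCommMonoid M]
    [Module R M] (a b : ℕ → R) (u : ℕ → M) (n : ℕ) :
    ∑ k ∈ range (n + 1), b (n - k) • ∑ j ∈ range (k + 1), a (k - j) • u j =
      ∑ j ∈ range (n + 1), (∑ i ∈ range (n - j + 1), b (n - j - i) * a i) • u j := by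
  simp_rw [smul_sum, smul_smul, range_eq_Ico]
  rw [← sum_Ico_Ico_comm]
  refine sum_congr rfl fun j hj => ?_
  rw [sum_smul, sum_Ico_eq_sum_range, ← range_eq_Ico]
  rw [mem_Ico] at hj
  rw [show n + 1 - j = n - j + 1 by omega]
  refine sum_congr rfl fun i _ => ?_
  rw [Nat.add_sub_cancel_left, Nat.sub_add_eq]

theorem sum_range_cCoeff_mul_cCoeff_one_sub {β : ℝ} (hβ0 : 0 < β) (hβ1 : β < 1) (m : ℕ) :
    ∑ i ∈ range (m + 1), cCoeff β (m - i) * cCoeff (1 - β) i = 1 := by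
  have h := Ring.multichoose_add_s11 (1 - β) β m
  rw [sub_add_cancel, Ring.multichoose_one, Nat.sum_antidiagonal_eq_sum_range_succ
    (fun i j => Ring.multichoose (1 - β) i * Ring.multichoose β j)] at h
  refine (sum_congr rfl fun i _ => ?_).trans h.symm
  rw [cCoeff_eq_multichoose hβ0, cCoeff_eq_multichoose (by linarith), mul_comm]

theorem caputo_of_lt_one {h β : ℝ} (hh : 0 < h) (hβ : β < 1) {d : ℕ} (u : ℕ → Fin d → ℝ)
    (n : ℕ) :
    caputo h β u n =
      h ^ (-β) • ∑ k ∈ range (n + 1), cCoeff (1 - β) (n - k) • (u (k + 1) - u k) := by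
  simp_rw [caputo, if_pos hβ, smul_comm _ h⁻¹, ← smul_sum, smul_smul, ← div_eq_mul_inv,
    ← Real.rpow_sub_one hh.ne', sub_sub_cancel_left]

theorem caputo_one (h : ℝ) {d : ℕ} (u : ℕ → Fin d → ℝ) (n : ℕ) :
    caputo h 1 u n = h⁻¹ • (u (n + 1) - u n) := by
  simp [caputo]

theorem smul_sum_cCoeff_smul_caputo {h β : ℝ} (hh : 0 < h) (hβ0 : 0 < β) (hβ1 : β ≤ 1) {d : ℕ}
    (u : ℕ → Fin d → ℝ) (m : ℕ) :
    h ^ β • ∑ r ∈ range (m + 1), cCoeff β (m - r) • caputo h β u r = u (m + 1) - u 0 := by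
  rw [← sum_range_sub]
  rcases hβ1.lt_or_eq with hβ1 | rfl
  · simp_rw [caputo_of_lt_one hh hβ1, smul_comm (cCoeff β _) (h ^ (-β)), ← smul_sum, smul_smul,
      ← Real.rpow_add hh, add_neg_cancel, Real.rpow_zero, one_smul,
      sum_range_smul_sum_range_smul_comm, sum_range_cCoeff_mul_cCoeff_one_sub hβ0 hβ1, one_smul]
  · simp_rw [caputo_one, cCoeff_one, one_smul, Real.rpow_one, ← smul_sum, smul_inv_smul₀ hh.ne']

theorem eq_add_smul_sum_cCoeff_smul_caputo {h β : ℝ} (hh : 0 < h) (hβ0 : 0 < β) (hβ1 : β ≤ 1)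
    {d : ℕ} (u : ℕ → Fin d → ℝ) (n : ℕ) :
    u n = u 0 + h ^ β • ∑ r ∈ range n, cCoeff β (n - 1 - r) • caputo h β u r := by
  cases n with
  | zero => simp
  | succ m => rw [Nat.add_sub_cancel, smul_sum_cCoeff_smul_caputo hh hβ0 hβ1, add_sub_cancel]

theorem caputo_of_solution_general (h α β : ℝ) (hh : 0 < h)
    (hβ1 : 0 < β) (hβ2 : β ≤ 1)
    (d : ℕ) (f : ℕ → (Fin d → ℝ) → Fin d → ℝ) (xa x0 : Fin d → ℝ)
    (X : ℕ → Fin d → ℝ) (hX : IsSolIVP h α β f xa x0 X) (n : ℕ) :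
    caputo h α X n = x0 + h ^ β • ∑ r ∈ Finset.range n, cCoeff β (n - 1 - r) • f r (X r) := by
  obtain ⟨hsol, -, hx0⟩ := hX
  rw [eq_add_smul_sum_cCoeff_smul_caputo hh hβ1 hβ2 (caputo h α X) n, hx0]
  simp only [hsol]

theorem caputo_of_solution (h α β : ℝ) (hh : 0 < h)
    (hα1 : 0 < α) (hα2 : α ≤ 1) (hβ1 : 0 < β) (hβ2 : β ≤ 1)
    (d : ℕ) (hd : 1 ≤ d) (f : ℕ → (Fin d → ℝ) → Fin d → ℝ) (xa x0 : Fin d → ℝ)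
    (X : ℕ → Fin d → ℝ) (hX : IsSolIVP h α β f xa x0 X) (n : ℕ) :
    caputo h α X n = x0 + h ^ β • ∑ r ∈ Finset.range n, cCoeff β (n - 1 - r) • f r (X r) :=
  caputo_of_solution_general h α β hh hβ1 hβ2 d f xa x0 X hX n
end

section
/- Let h>0, α,β∈(0,1], d≥1, and let f: ℕ×ℝ^d→ℝ^d satisfy f(n,x)∈ℝ^d_≥ for every n∈ℕ and every x∈ℝ^d_≥. Then the sequential Caputo system is positive: for all initial data x_a, x_0∈ℝ^d_≥, the unique solution X of the sequential Caputo initial value problem satisfies X(n)∈ℝ^d_≥ for every n∈ℕ. -/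
/-!
The Caputo difference of order `γ ∈ (0,1)` is a convolution of the forward differences with the
kernel `c_{1-γ}`, which is positive, nonincreasing and starts at `c_{1-γ}(0) = 1`. Summation by
parts writes `u(n+1)` as `C_γ u(n)` (up to a positive factor) plus a nonnegative combination of
`u(0), …, u(n)`. So `u(0..n) ≥ 0` and `C_γ u(n) ≥ 0` force `u(n+1) ≥ 0`, and positivity of
`X` and `C_α X` propagates together, the second one through the equation `C_β(C_α X) = f(·, X)`.
-/

open Finset

lemma cCoeff_zero {γ : ℝ} (hγ : 0 < γ) : cCoeff γ 0 = 1 := by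
  simp [cCoeff, div_self (Real.Gamma_pos_of_pos hγ).ne']

lemma cCoeff_nonneg {γ : ℝ} (hγ : 0 < γ) (m : ℕ) : 0 ≤ cCoeff γ m :=
  div_nonneg (Real.Gamma_pos_of_pos (by positivity)).le
    (mul_pos (Real.Gamma_pos_of_pos hγ) (Real.Gamma_pos_of_pos (by positivity))).le

lemma cCoeff_succ {γ : ℝ} (hγ : 0 < γ) (m : ℕ) :
    cCoeff γ (m + 1) = (γ + m) / (m + 1) * cCoeff γ m := by
  have hΓγ := (Real.Gamma_pos_of_pos hγ).ne'
  have hΓm := (Real.Gamma_pos_of_pos (Nat.cast_add_one_pos m)).ne'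
  simp only [cCoeff, Nat.cast_add_one, ← add_assoc,
    Real.Gamma_add_one (by positivity : γ + m ≠ 0),
    Real.Gamma_add_one (Nat.cast_add_one_pos m).ne']
  field_simp

lemma cCoeff_antitone {γ : ℝ} (hγ0 : 0 < γ) (hγ1 : γ ≤ 1) : Antitone (cCoeff γ) := by
  refine antitone_nat_of_succ_le fun m => ?_
  rw [cCoeff_succ hγ0]
  have hratio : (γ + m) / (m + 1) ≤ 1 := by
    rw [div_le_one (by positivity)]; linarith
  exact mul_le_of_le_one_left (cCoeff_nonneg hγ0 m) hratio

lemma sum_mul_sub_eq (c v : ℕ → ℝ) (n : ℕ) :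
    ∑ k ∈ range (n + 1), c (n - k) * (v (k + 1) - v k) =
      c 0 * v (n + 1) - c n * v 0 -
        ∑ k ∈ range n, (c (n - (k + 1)) - c (n - k)) * v (k + 1) := by
  simp only [mul_sub, sub_mul, sum_sub_distrib]
  rw [sum_range_succ (fun k => c (n - k) * v (k + 1)),
    sum_range_succ' (fun k => c (n - k) * v k)]
  simp only [Nat.sub_self, Nat.sub_zero]
  ring

lemma nonneg_succ_of_sum_mul_sub_nonneg {c v : ℕ → ℝ} (hc : Antitone c) (hc0 : 0 < c 0)
    {n : ℕ} (hcn : 0 ≤ c n) (hv : ∀ k ≤ n, 0 ≤ v k)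
    (hsum : 0 ≤ ∑ k ∈ range (n + 1), c (n - k) * (v (k + 1) - v k)) :
    0 ≤ v (n + 1) := by
  have hrest : 0 ≤ ∑ k ∈ range n, (c (n - (k + 1)) - c (n - k)) * v (k + 1) :=
    sum_nonneg fun k hk => mul_nonneg (sub_nonneg.2 (hc (by omega)))
      (hv _ (by simp at hk; omega))
  have hinit : 0 ≤ c n * v 0 := mul_nonneg hcn (hv 0 (Nat.zero_le n))
  rw [sum_mul_sub_eq] at hsum
  exact nonneg_of_mul_nonneg_right (by linarith : 0 ≤ c 0 * v (n + 1)) hc0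

lemma caputo_apply_of_lt_one {h α : ℝ} (hα : α < 1) {d : ℕ} (u : ℕ → Fin d → ℝ) (n : ℕ)
    (i : Fin d) :
    caputo h α u n i =
      h ^ (1 - α) * h⁻¹ * ∑ k ∈ range (n + 1), cCoeff (1 - α) (n - k) * (u (k + 1) i - u k i) := by
  simp only [caputo, if_pos hα, Pi.smul_apply, Finset.sum_apply, Pi.sub_apply, smul_eq_mul, mul_sum]
  exact sum_congr rfl fun _ _ => by ring

lemma caputo_apply_of_one_le {h α : ℝ} (hα : 1 ≤ α) {d : ℕ} (u : ℕ → Fin d → ℝ) (n : ℕ)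
    (i : Fin d) : caputo h α u n i = h⁻¹ * (u (n + 1) i - u n i) := by
  simp [caputo, not_lt.2 hα]

lemma nonneg_succ_of_caputo_nonneg {h α : ℝ} (hh : 0 < h) (hα : 0 < α) {d : ℕ}
    {u : ℕ → Fin d → ℝ} {n : ℕ} {i : Fin d} (hu : ∀ k ≤ n, 0 ≤ u k i)
    (hcap : 0 ≤ caputo h α u n i) : 0 ≤ u (n + 1) i := by
  rcases lt_or_ge α 1 with hα1 | hα1
  · rw [caputo_apply_of_lt_one hα1] at hcap
    have hscale : 0 < h ^ (1 - α) * h⁻¹ := by positivity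
    have hγ : 0 < 1 - α := by linarith
    refine nonneg_succ_of_sum_mul_sub_nonneg (cCoeff_antitone hγ (by linarith))
      ?_ (cCoeff_nonneg hγ n) hu (nonneg_of_mul_nonneg_right hcap hscale)
    rw [cCoeff_zero hγ]
    exact one_pos
  · rw [caputo_apply_of_one_le hα1] at hcap
    have := nonneg_of_mul_nonneg_right hcap (inv_pos.2 hh)
    linarith [hu n le_rfl]

theorem ivp_positive_general (h α β : ℝ) (hh : 0 < h)
    (hα1 : 0 < α) (hβ1 : 0 < β)
    (d : ℕ) (f : ℕ → (Fin d → ℝ) → Fin d → ℝ)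
    (hf : ∀ n : ℕ, ∀ x : Fin d → ℝ, (∀ i, 0 ≤ x i) → ∀ i, 0 ≤ f n x i)
    (xa x0 : Fin d → ℝ) (hxa : ∀ i, 0 ≤ xa i) (hx0 : ∀ i, 0 ≤ x0 i)
    (X : ℕ → Fin d → ℝ) (hX : IsSolIVP h α β f xa x0 X) :
    ∀ n : ℕ, ∀ i, 0 ≤ X n i := by
  obtain ⟨hequation, hX0, hY0⟩ := hX
  have hboth : ∀ n, (∀ i, 0 ≤ X n i) ∧ ∀ i, 0 ≤ caputo h α X n i := by
    intro n
    induction n using Nat.strong_induction_on with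
    | _ n ih =>
      cases n with
      | zero => exact ⟨hX0 ▸ hxa, hY0 ▸ hx0⟩
      | succ m =>
        have hXm := (ih m m.lt_succ_self).1
        refine ⟨fun i => nonneg_succ_of_caputo_nonneg hh hα1
            (fun k hk => (ih k (by omega)).1 i) ((ih m m.lt_succ_self).2 i),
          fun i => nonneg_succ_of_caputo_nonneg hh hβ1
            (fun k hk => (ih k (by omega)).2 i) ?_⟩
        rw [hequation m]
        exact hf m (X m) hXm i
  exact fun n => (hboth n).1

theorem ivp_positive (h α β : ℝ) (hh : 0 < h)
    (hα1 : 0 < α) (hα2 : α ≤ 1) (hβ1 : 0 < β) (hβ2 : β ≤ 1)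
    (d : ℕ) (hd : 1 ≤ d) (f : ℕ → (Fin d → ℝ) → Fin d → ℝ)
    (hf : ∀ n : ℕ, ∀ x : Fin d → ℝ, (∀ i, 0 ≤ x i) → ∀ i, 0 ≤ f n x i)
    (xa x0 : Fin d → ℝ) (hxa : ∀ i, 0 ≤ xa i) (hx0 : ∀ i, 0 ≤ x0 i)
    (X : ℕ → Fin d → ℝ) (hX : IsSolIVP h α β f xa x0 X) :
    ∀ n : ℕ, ∀ i, 0 ≤ X n i :=
  ivp_positive_general h α β hh hα1 hβ1 d f hf xa x0 hxa hx0 X hX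
end
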